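/- Doob factorization under perfect recall. Suppose the agent set A is countable, player p (with A^p finite) satisfies perfect recall with the p-configuration-ordering φ and the Borel measurable functional information assumption (with standard Borel spaces ℤ_a and measurable maps Z_a : H → ℤ_a generating 𝓘_a). Let κ ∈ Σ^p, let m^p be an A-mixed strategy of player p, and let Φ : ∏_{a∈range(κ)} U_a → ℝ be bounded measurable. Then there exists a measurable function Ψ : (𝕎 × ℤ_{last(κ)}, 𝒲 ⊗ 𝓩_{last(κ)}) → (ℝ, Borel) such that Ψ(w, Z_{last(κ)}(h)) = 1_{H_κ^φ}(h) · Φ((m^p_a(w^p, h))_{a∈range(κ)}) for all w ∈ 𝕎 and all h ∈ H. -/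

import Mathlib

open MeasureTheory

namespace WG

variable {A Ω : Type*} {U : A → Type*}

/-- The configuration (hybrid) space of a W-model. -/
abbrev Config (U : A → Type*) (Ω : Type*) := (∀ a, U a) × Ω

section Core

variable [MeasurableSpace Ω] [∀ a, MeasurableSpace (U a)]

/-- A pure W-strategy profile: each agent's strategy is measurable w.r.t. his
information field. -/
def IsPureProfile (Ifld : A → MeasurableSpace (Config U Ω))
    (lam : ∀ a : A, Config U Ω → U a) : Prop :=
  ∀ a, @Measurable _ _ (Ifld a) _ (lam a)

/-- `u` solves the closed-loop equations for profile `lam` and state of Nature `ω`. -/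
def IsSolution (lam : ∀ a : A, Config U Ω → U a) (ω : Ω) (u : ∀ a, U a) : Prop :=
  ∀ a, u a = lam a (u, ω)

/-- Playability: unique solution of the closed-loop equations for every pure
W-strategy profile and every state of Nature. -/
def Playable (Ifld : A → MeasurableSpace (Config U Ω)) : Prop :=
  ∀ lam, IsPureProfile Ifld lam → ∀ ω : Ω, ∃! u, IsSolution lam ω u

/-- The solution map `S_λ` of a playable W-model. -/
noncomputable def solMap {Ifld : A → MeasurableSpace (Config U Ω)} (hP : Playable Ifld)
    {lam : ∀ a : A, Config U Ω → U a} (hlam : IsPureProfile Ifld lam) (ω : Ω) :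
    Config U Ω :=
  ((hP lam hlam ω).exists.choose, ω)

/-- The profile `(u_B, λ_{-B})`: constant actions `uB` on `B`, components of `lam` off `B`. -/
noncomputable def substProfile (B : Set A) (uB : ∀ a : A, U a)
    (lam : ∀ a : A, Config U Ω → U a) : ∀ a : A, Config U Ω → U a := fun a =>
  haveI := Classical.dec (a ∈ B)
  if a ∈ B then (fun _ => uB a) else lam a

theorem substProfile_isPure {Ifld : A → MeasurableSpace (Config U Ω)}
    {lam : ∀ a : A, Config U Ω → U a} (hlam : IsPureProfile Ifld lam)
    (B : Set A) (uB : ∀ a : A, U a) :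
    IsPureProfile Ifld (substProfile B uB lam) := by
  intro a
  by_cases h : a ∈ B
  · simpa [substProfile, h] using (measurable_const : @Measurable _ _ (Ifld a) _ fun _ => uB a)
  · simpa [substProfile, h] using hlam a

/-- The cylinder σ-field on the configuration space generated by the action
coordinate of agent `a`. -/
def actionCyl (a : A) : MeasurableSpace (Config U Ω) :=
  MeasurableSpace.comap (fun h : Config U Ω => h.1 a) inferInstance

/-- The cylinder σ-field on the configuration space generated by Nature's coordinate. -/
def natureCyl : MeasurableSpace (Config U Ω) :=
  MeasurableSpace.comap (fun h : Config U Ω => h.2) inferInstance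

end Core

section Orderings

/-- `κ` is a total ordering of the agents of `Ap` (encoded as a duplicate-free list
enumerating exactly `Ap`). -/
def IsTotalOrderingOf (Ap : Finset A) (κ : List A) : Prop :=
  κ.Nodup ∧ ∀ a, a ∈ κ ↔ a ∈ Ap

/-- A `p`-configuration-ordering: a map from configurations to total orderings of `Ap`. -/
def ConfigOrdering (Ap : Finset A) (φ : Config U Ω → List A) : Prop :=
  ∀ h, IsTotalOrderingOf Ap (φ h)

/-- The set `H_κ^φ` of configurations whose ordering starts with `κ`. -/
def ordEvent (φ : Config U Ω → List A) (κ : List A) : Set (Config U Ω) :=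
  {h | (φ h).take κ.length = κ}

variable [MeasurableSpace Ω] [∀ a, MeasurableSpace (U a)]

/-- Perfect recall of the player with agents `Ap` w.r.t. the configuration-ordering `φ`.
An ordering `κ ∈ Σ^p` is encoded as `κ₁ ++ [a]` with `first(κ) = κ₁`, `last(κ) = a`. -/
def PerfectRecall (Ifld : A → MeasurableSpace (Config U Ω)) (Ap : Finset A)
    (φ : Config U Ω → List A) : Prop :=
  ∀ (κ₁ : List A) (a : A), (κ₁ ++ [a]).Nodup → (∀ b ∈ κ₁ ++ [a], b ∈ Ap) →
    ∀ s : Set (Config U Ω),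
      MeasurableSet[⨆ b ∈ κ₁, (actionCyl (U := U) (Ω := Ω) b ⊔ Ifld b)] s →
      MeasurableSet[Ifld a] (ordEvent φ (κ₁ ++ [a]) ∩ s)

/-- The σ-field `𝓗^p_B`: generated by Nature, the actions of agents in `B`, and the
actions of the agents not belonging to player `p`. -/
def subHistField (Ap : Finset A) (B : Set A) : MeasurableSpace (Config U Ω) :=
  natureCyl ⊔ (⨆ b ∈ B, actionCyl b) ⊔ (⨆ c ∈ ((Ap : Set A))ᶜ, actionCyl c)

/-- Partial causality of the player with agents `Ap` w.r.t. `φ`. -/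
def PartialCausality (Ifld : A → MeasurableSpace (Config U Ω)) (Ap : Finset A)
    (φ : Config U Ω → List A) : Prop :=
  ∀ (κ₁ : List A) (a : A), (κ₁ ++ [a]).Nodup → (∀ b ∈ κ₁ ++ [a], b ∈ Ap) →
    ∀ s : Set (Config U Ω), MeasurableSet[Ifld a] s →
      MeasurableSet[subHistField (U := U) (Ω := Ω) Ap {b | b ∈ κ₁}] (ordEvent φ (κ₁ ++ [a]) ∩ s)

end Orderings

section Mixed

variable [MeasurableSpace Ω] [∀ a, MeasurableSpace (U a)]

/-- The σ-field on the randomization space `𝕎 = A → ℝ` generated by the coordinates in `s`. -/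
def coordField (s : Set A) : MeasurableSpace (A → ℝ) :=
  ⨆ a ∈ s, MeasurableSpace.comap (fun w => w a) inferInstance

variable {P : Type*}

/-- An A-mixed strategy profile (all players at once, `pl` assigning each agent to his
player): the action of agent `a` may depend measurably on the randomization coordinates
of the agents of his player and on his information. -/
def IsMixedProfile (Ifld : A → MeasurableSpace (Config U Ω)) (pl : A → P)
    (m : ∀ a : A, (A → ℝ) × Config U Ω → U a) : Prop :=
  ∀ a, @Measurable _ _ ((coordField {b | pl b = pl a}).prod (Ifld a)) _ (m a)

theorem isPureProfile_section {Ifld : A → MeasurableSpace (Config U Ω)} {pl : A → P}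
    {m : ∀ a : A, (A → ℝ) × Config U Ω → U a} (hm : IsMixedProfile Ifld pl m)
    (w : A → ℝ) : IsPureProfile Ifld (fun a h => m a (w, h)) := fun a =>
  (hm a).comp (@measurable_prodMk_left _ _ (coordField {b | pl b = pl a}) (Ifld a) w)

/-- The map `T_m : (ω, w) ↦ S_{m(w, ·)}(ω)`. -/
noncomputable def mixedSol {Ifld : A → MeasurableSpace (Config U Ω)} (hP : Playable Ifld)
    {pl : A → P} {m : ∀ a : A, (A → ℝ) × Config U Ω → U a}
    (hm : IsMixedProfile Ifld pl m) (x : Ω × (A → ℝ)) : Config U Ω :=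
  solMap hP (isPureProfile_section hm x.2) x.1

/-- An A-behavioral strategy of the player with agents `Ap`: agent `a`'s action depends
(measurably) only on his own randomization coordinate and his information. -/
def IsBehavioralOn (Ifld : A → MeasurableSpace (Config U Ω)) (Ap : Finset A)
    (mB : ∀ a : A, ℝ → Config U Ω → U a) : Prop :=
  ∀ a ∈ Ap, @Measurable (ℝ × Config U Ω) (U a)
    (MeasurableSpace.prod inferInstance (Ifld a)) _ (fun q => mB a q.1 q.2)

/-- Replace, in the profile `m`, the components of the agents of `Ap` by the
behavioral strategy `mB`. -/
noncomputable def combineProfile (Ap : Finset A)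
    (mB : ∀ a : A, ℝ → Config U Ω → U a)
    (m : ∀ a : A, (A → ℝ) × Config U Ω → U a) :
    ∀ a : A, (A → ℝ) × Config U Ω → U a := fun a x =>
  haveI := Classical.dec (a ∈ Ap)
  if a ∈ Ap then mB a (x.1 a) x.2 else m a x

/-- `ℓW` is the product of copies of `μ₀` (marginal characterization on finite cylinders). -/
def IsProductOf (μ₀ : Measure ℝ) (ℓW : Measure (A → ℝ)) : Prop :=
  ∀ (s : Finset A) (E : A → Set ℝ), (∀ a ∈ s, MeasurableSet (E a)) →
    ℓW {w | ∀ a ∈ s, w a ∈ E a} = ∏ a ∈ s, μ₀ (E a)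

/-- `p`-strong measurability: joint measurability of all partial solution maps
`Ŝ^B_{λ_{-B}}` for `B ⊆ A^p`. -/
def PStronglyMeasurable {Ifld : A → MeasurableSpace (Config U Ω)} (hP : Playable Ifld)
    (Ap : Finset A) : Prop :=
  ∀ (B : Set A), B ⊆ (Ap : Set A) →
    ∀ (lam : ∀ a : A, Config U Ω → U a) (hlam : IsPureProfile Ifld lam),
      @Measurable (Ω × (∀ a, U a)) (Config U Ω)
        (MeasurableSpace.prod inferInstance
          (⨆ b ∈ B, MeasurableSpace.comap (fun u : ∀ a, U a => u b) inferInstance))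
        inferInstance
        (fun x => solMap hP (substProfile_isPure hlam B x.2) x.1)

/-- The uniform (Lebesgue) probability on `[0,1] ⊆ ℝ`. -/
noncomputable def unif : Measure ℝ := volume.restrict (Set.Icc (0 : ℝ) 1)

end Mixed

section Kernels

/-- Product of the action spaces of the agents enumerated by the list `l`. -/
abbrev SubProd (U : A → Type*) (l : List A) := ∀ b : {x // x ∈ l}, U b.val

/-- Glue a `κ₁`-indexed family of actions with an action of the last agent `a`. -/
noncomputable def extendProd {U : A → Type*} (κ₁ : List A) (a : A)
    (u : SubProd U κ₁) (x : U a) : SubProd U (κ₁ ++ [a]) := fun b =>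
  haveI := Classical.dec (b.val ∈ κ₁)
  if hb : b.val ∈ κ₁ then u ⟨b.val, hb⟩
  else
    have hba : b.val = a := by
      rcases List.mem_append.mp b.2 with h | h
      · exact absurd h hb
      · simpa using h
    cast (congrArg U hba).symm x

/-- `η` is a regular conditional distribution of `μ` given the random variable `X`. -/
def IsRCD {α β : Type*} [MeasurableSpace α] [MeasurableSpace β]
    (μ : Measure α) (X : α → β) (η : β → Measure α) : Prop :=
  (∀ z, IsProbabilityMeasure (η z)) ∧
  (∀ ⦃E : Set α⦄, MeasurableSet E → Measurable fun z => η z E) ∧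
  (∀ ⦃E : Set α⦄, MeasurableSet E → ∀ ⦃C : Set β⦄, MeasurableSet C →
    μ (E ∩ X ⁻¹' C) = ∫⁻ z in C, η z E ∂(Measure.map X μ))

/-- Merge randomizations: coordinates in `Ap` taken from `wp`, the others from `wmp`. -/
noncomputable def merge (Ap : Finset A) (wp : ↥Ap → ℝ) (wmp : A → ℝ) : A → ℝ := fun a =>
  haveI := Classical.dec (a ∈ Ap)
  if h : a ∈ Ap then wp ⟨a, h⟩ else wmp a

end Kernels

end WG

/-!
Perfect recall makes `H_κ^φ` an `𝓘_{last κ}`-measurable event and, more, makes its intersection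
with every event generated by the actions and information of the agents of `first κ`
`𝓘_{last κ}`-measurable. The map `(w, h) ↦ Φ((m_a(w, h))_{a ∈ range κ})` is measurable for `𝒲`
tensored with the σ-field of those agents joined with `𝓘_{last κ}`, so cutting it down to
`H_κ^φ` makes it `𝒲 ⊗ 𝓘_{last κ}`-measurable. Since `𝓘_{last κ} = Z_{last κ}⁻¹(𝓩_{last κ})`,
the Doob–Dynkin lemma factors it through `(w, h) ↦ (w, Z_{last κ}(h))`.
-/

namespace MeasurableSpace

variable {X W : Type*}

def ofInter (m₀ : MeasurableSpace X) {T : Set X} (hT : MeasurableSet[m₀] T) :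
    MeasurableSpace X where
  MeasurableSet' s := MeasurableSet[m₀] (T ∩ s)
  measurableSet_empty := by
    simp only [Set.inter_empty]
    exact @MeasurableSet.empty _ m₀
  measurableSet_compl s hs := by
    rw [← Set.sdiff_eq, ← Set.sdiff_self_inter]
    exact hT.diff hs
  measurableSet_iUnion f hf := by
    simp only [Set.inter_iUnion]
    exact MeasurableSet.iUnion hf

theorem measurableSet_ofInter {m₀ : MeasurableSpace X} {T : Set X} {hT : MeasurableSet[m₀] T}
    {s : Set X} : MeasurableSet[ofInter m₀ hT] s ↔ MeasurableSet[m₀] (T ∩ s) :=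
  Iff.rfl

theorem prod_le_ofInter_preimage_snd (mW : MeasurableSpace W) {m m₀ : MeasurableSpace X}
    {T : Set X} (hT : MeasurableSet[m₀] T) (h : m ≤ ofInter m₀ hT) :
    mW.prod m ≤ ofInter (mW.prod m₀) (hT.preimage (@measurable_snd _ _ mW m₀)) := by
  refine sup_le ?_ ?_
  · rintro _ ⟨t, ht, rfl⟩
    exact (hT.preimage (@measurable_snd _ _ mW m₀)).inter
      (ht.preimage (@measurable_fst _ _ mW m₀))
  · rintro _ ⟨t, ht, rfl⟩
    rw [measurableSet_ofInter, ← Set.preimage_inter]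
    exact (measurableSet_ofInter.mp (h t ht)).preimage (@measurable_snd _ _ mW m₀)

end MeasurableSpace

open MeasurableSpace in
theorem Measurable.indicator_of_le_ofInter {X β : Type*} [Zero β] [MeasurableSpace β]
    {m m₀ : MeasurableSpace X} {T : Set X} {hT : MeasurableSet[m₀] T} {f : X → β}
    (hf : Measurable[m] f) (h : m ≤ ofInter m₀ hT) : Measurable[m₀] (T.indicator f) := by
  intro B hB
  rw [Set.indicator_preimage, Set.ite, Set.inter_comm]
  exact (measurableSet_ofInter.mp (h _ (hf hB))).union
    (((measurable_const : Measurable[m₀] fun _ : X => (0 : β)) hB).diff hT)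

namespace WG

variable {A Ω : Type*} {U : A → Type*} [∀ a, MeasurableSpace (U a)]

def recallField (Ifld : A → MeasurableSpace (Config U Ω)) (κ₁ : List A) :
    MeasurableSpace (Config U Ω) :=
  ⨆ b ∈ κ₁, (actionCyl (U := U) (Ω := Ω) b ⊔ Ifld b)

theorem coordField_le (s : Set A) :
    coordField s ≤ (inferInstance : MeasurableSpace (A → ℝ)) :=
  iSup₂_le fun a _ => (measurable_pi_apply a).comap_le

theorem le_recallField_sup {Ifld : A → MeasurableSpace (Config U Ω)} {κ₁ : List A} {aL b : A}
    (hb : b ∈ κ₁ ++ [aL]) : Ifld b ≤ recallField Ifld κ₁ ⊔ Ifld aL := by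
  rcases List.mem_append.mp hb with hb | hb
  · exact le_sup_of_le_left <| le_sup_right.trans <|
      le_iSup₂ (f := fun c (_ : c ∈ κ₁) => actionCyl (U := U) (Ω := Ω) c ⊔ Ifld c) b hb
  · rw [List.mem_singleton.mp hb]
    exact le_sup_right

theorem PerfectRecall.measurableSet_ordEvent [MeasurableSpace Ω]
    {Ifld : A → MeasurableSpace (Config U Ω)} {Ap : Finset A} {φ : Config U Ω → List A}
    (hPR : PerfectRecall Ifld Ap φ) {κ₁ : List A} {aL : A} (hκnd : (κ₁ ++ [aL]).Nodup)
    (hκmem : ∀ b ∈ κ₁ ++ [aL], b ∈ Ap) :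
    MeasurableSet[Ifld aL] (ordEvent φ (κ₁ ++ [aL])) := by
  simpa using hPR κ₁ aL hκnd hκmem Set.univ (@MeasurableSet.univ _ (recallField Ifld κ₁))

theorem PerfectRecall.recallField_sup_le_ofInter [MeasurableSpace Ω]
    {Ifld : A → MeasurableSpace (Config U Ω)} {Ap : Finset A} {φ : Config U Ω → List A}
    (hPR : PerfectRecall Ifld Ap φ) {κ₁ : List A} {aL : A} (hκnd : (κ₁ ++ [aL]).Nodup)
    (hκmem : ∀ b ∈ κ₁ ++ [aL], b ∈ Ap) :
    recallField Ifld κ₁ ⊔ Ifld aL ≤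
      MeasurableSpace.ofInter (Ifld aL) (hPR.measurableSet_ordEvent hκnd hκmem) :=
  sup_le (fun s hs => hPR κ₁ aL hκnd hκmem s hs)
    (fun _ hs => (hPR.measurableSet_ordEvent hκnd hκmem).inter hs)

theorem measurable_subProd_actions {Ifld : A → MeasurableSpace (Config U Ω)} {Ap : Finset A}
    {m : ∀ a : A, (A → ℝ) × Config U Ω → U a}
    (hm : ∀ a ∈ Ap, Measurable[(coordField (Ap : Set A)).prod (Ifld a)] (m a))
    {l : List A} {M : MeasurableSpace (Config U Ω)} (hlAp : ∀ b ∈ l, b ∈ Ap)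
    (hlM : ∀ b ∈ l, Ifld b ≤ M) :
    Measurable[(inferInstance : MeasurableSpace (A → ℝ)).prod M]
      (fun x (b : {c // c ∈ l}) => m b.val x) :=
  @measurable_pi_lambda _ _ _ (_) _ _ fun b =>
    (hm b.val (hlAp b.val b.2)).mono
      (sup_le_sup (MeasurableSpace.comap_mono (coordField_le _))
        (MeasurableSpace.comap_mono (hlM b.val b.2))) le_rfl

end WG

theorem statement16_general
    {A Ω : Type*} [MeasurableSpace Ω] {U : A → Type*}
    [∀ a, MeasurableSpace (U a)]
    (Ifld : A → MeasurableSpace (WG.Config U Ω))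
    (Ap : Finset A)
    (φ : WG.Config U Ω → List A)
    (hPR : WG.PerfectRecall Ifld Ap φ)
    (Zt : A → Type*) [∀ a, MeasurableSpace (Zt a)]
    (Zf : ∀ a, WG.Config U Ω → Zt a)
    (hZgen : ∀ a ∈ Ap, MeasurableSpace.comap (Zf a) inferInstance = Ifld a)
    (κ₁ : List A) (aL : A)
    (hκnd : (κ₁ ++ [aL]).Nodup) (hκmem : ∀ b ∈ κ₁ ++ [aL], b ∈ Ap)
    (m : ∀ a : A, (A → ℝ) × WG.Config U Ω → U a)
    (hm : ∀ a ∈ Ap,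
      @Measurable _ _ ((WG.coordField (↑Ap : Set A)).prod (Ifld a)) _ (m a))
    (Φ : WG.SubProd U (κ₁ ++ [aL]) → ℝ)
    (hΦm : Measurable Φ) :
    ∃ Ψ : (A → ℝ) × Zt aL → ℝ, Measurable Ψ ∧
      ∀ (w : A → ℝ) (h : WG.Config U Ω),
        Ψ (w, Zf aL h) =
          Set.indicator (WG.ordEvent φ (κ₁ ++ [aL]))
            (fun h' => Φ fun b => m b.val (w, h')) h := by
  have hG : Measurable[(inferInstance : MeasurableSpace (A → ℝ)).prod
      (WG.recallField Ifld κ₁ ⊔ Ifld aL)] fun x => Φ fun b => m b.val x :=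
    hΦm.comp (WG.measurable_subProd_actions hm hκmem fun _ => WG.le_recallField_sup)
  have hcomap : MeasurableSpace.comap (Prod.map id (Zf aL)) inferInstance =
      (inferInstance : MeasurableSpace (A → ℝ)).prod (Ifld aL) := by
    rw [← hZgen aL (hκmem aL (by simp))]
    exact (MeasurableSpace.comap_prodMap _ _).trans (by rw [MeasurableSpace.comap_id])
  have hF : Measurable[MeasurableSpace.comap (Prod.map id (Zf aL)) inferInstance]
      ((Prod.snd ⁻¹' WG.ordEvent φ (κ₁ ++ [aL])).indicator
        fun x => Φ fun b => m b.val x) := by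
    rw [hcomap]
    exact hG.indicator_of_le_ofInter <| MeasurableSpace.prod_le_ofInter_preimage_snd _ _ <|
      hPR.recallField_sup_le_ofInter hκnd hκmem
  obtain ⟨Ψ, hΨm, hΨ⟩ := hF.exists_eq_measurable_comp
  exact ⟨Ψ, hΨm, fun w h => (congrFun hΨ (w, h)).symm⟩

/-- **Doob factorization under perfect recall.** With a countable agent
set, suppose player `p` (with finite agent set `Ap`) satisfies perfect recall with `φ`
and the Borel measurable functional information assumption. Let `κ = κ₁ ++ [aL] ∈ Σ^p`,
`m^p` an A-mixed strategy of player `p`, and `Φ` a bounded measurable function on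
`∏_{a ∈ range κ} U_a`. Then there is a measurable `Ψ : 𝕎 × ℤ_{last κ} → ℝ` with
`Ψ(w, Z_{last κ}(h)) = 1_{H_κ^φ}(h) · Φ((m_a(w^p, h))_{a ∈ range κ})` everywhere. -/
theorem statement16
    {A Ω : Type*} [Countable A] [MeasurableSpace Ω] {U : A → Type*}
    [∀ a, MeasurableSpace (U a)]
    (Ifld : A → MeasurableSpace (WG.Config U Ω))
    (hIle : ∀ a, Ifld a ≤ (inferInstance : MeasurableSpace (WG.Config U Ω)))
    (Ap : Finset A) (hApne : Ap.Nonempty)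
    (φ : WG.Config U Ω → List A) (hφ : WG.ConfigOrdering Ap φ)
    (hPR : WG.PerfectRecall Ifld Ap φ)
    (Zt : A → Type*) [∀ a, MeasurableSpace (Zt a)]
    (hZsb : ∀ a ∈ Ap, StandardBorelSpace (Zt a))
    (Zf : ∀ a, WG.Config U Ω → Zt a)
    (hZm : ∀ a ∈ Ap, Measurable (Zf a))
    (hZgen : ∀ a ∈ Ap, MeasurableSpace.comap (Zf a) inferInstance = Ifld a)
    (κ₁ : List A) (aL : A)
    (hκnd : (κ₁ ++ [aL]).Nodup) (hκmem : ∀ b ∈ κ₁ ++ [aL], b ∈ Ap)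
    (m : ∀ a : A, (A → ℝ) × WG.Config U Ω → U a)
    (hm : ∀ a ∈ Ap,
      @Measurable _ _ ((WG.coordField (↑Ap : Set A)).prod (Ifld a)) _ (m a))
    (Φ : WG.SubProd U (κ₁ ++ [aL]) → ℝ)
    (hΦm : Measurable Φ) (hΦb : ∃ C, ∀ u, |Φ u| ≤ C) :
    ∃ Ψ : (A → ℝ) × Zt aL → ℝ, Measurable Ψ ∧
      ∀ (w : A → ℝ) (h : WG.Config U Ω),
        Ψ (w, Zf aL h) =
          Set.indicator (WG.ordEvent φ (κ₁ ++ [aL]))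
            (fun h' => Φ fun b => m b.val (w, h')) h :=
  statement16_general Ifld Ap φ hPR Zt Zf hZgen κ₁ aL hκnd hκmem m hm Φ hΦm
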